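/- Concentration transfer for squared differences of sample means (inequality (14) in the paper's appendix): Let (Ω, F, P) be a probability space, let X and Y be real-valued random variables, and let a, b, ε be real numbers with 0 ≤ b ≤ a and 0 < ε ≤ 2(a+2). Then P( |(X − Y)² − (a − b)²| > ε ) ≤ 3 · [ P( |X − a| > ε/(4(a+2)) ) + P( |Y − b| > ε/(4(a+2)) ) ]. -/
import Mathlib


open MeasureTheory

/-- Concentration transfer for squared differences of sample means
(inequality (14) in the paper's appendix):
`P(|(X−Y)² − (a−b)²| > ε) ≤ 3·[P(|X−a| > ε/(4(a+2))) + P(|Y−b| > ε/(4(a+2)))]`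
for `0 ≤ b ≤ a` and `0 < ε ≤ 2(a+2)`. -/
theorem squared_difference_concentration_transfer
    {Ω : Type*} [MeasurableSpace Ω] (P : Measure Ω) [IsProbabilityMeasure P]
    (X Y : Ω → ℝ) (hX : Measurable X) (hY : Measurable Y)
    (a b ε : ℝ) (hb : 0 ≤ b) (hba : b ≤ a) (hε : 0 < ε) (hε2 : ε ≤ 2 * (a + 2)) :
    P {ω | ε < |(X ω - Y ω) ^ 2 - (a - b) ^ 2|}
      ≤ 3 * (P {ω | ε / (4 * (a + 2)) < |X ω - a|}
              + P {ω | ε / (4 * (a + 2)) < |Y ω - b|}) := by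
  set δ := ε / (4 * (a + 2)) with hδ
  have ha2 : (0:ℝ) < a + 2 := by linarith
  have hδε : δ * (4 * (a + 2)) = ε := by
    rw [hδ]; field_simp
  have hsub : {ω | ε < |(X ω - Y ω) ^ 2 - (a - b) ^ 2|}
      ⊆ {ω | δ < |X ω - a|} ∪ {ω | δ < |Y ω - b|} := by
    intro ω hω
    by_contra h
    simp only [Set.mem_union, Set.mem_setOf_eq, not_or, not_lt] at h
    obtain ⟨h1, h2⟩ := h
    simp only [Set.mem_setOf_eq] at hω
    have key : |(X ω - Y ω) ^ 2 - (a - b) ^ 2| ≤ ε := by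
      have hfac : (X ω - Y ω) ^ 2 - (a - b) ^ 2
          = ((X ω - Y ω) - (a - b)) * ((X ω - Y ω) + (a - b)) := by ring
      rw [hfac, abs_mul]
      have e1 : |(X ω - Y ω) - (a - b)| ≤ 2 * δ := by
        have : (X ω - Y ω) - (a - b) = (X ω - a) - (Y ω - b) := by ring
        rw [this]
        calc |(X ω - a) - (Y ω - b)| ≤ |X ω - a| + |Y ω - b| := abs_sub _ _
          _ ≤ 2 * δ := by linarith
      have h2δ : 2 * δ ≤ 1 := by nlinarith [hδε]
      have e2 : |(X ω - Y ω) + (a - b)| ≤ 2 * (a + 2) := by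
        calc |(X ω - Y ω) + (a - b)|
            ≤ |(X ω - Y ω) - (a - b)| + |2 * (a - b)| := by
              have : (X ω - Y ω) + (a - b) = ((X ω - Y ω) - (a - b)) + 2 * (a - b) := by ring
              rw [this]; exact abs_add_le _ _
          _ ≤ 2 * δ + 2 * (a - b) := by
              have : |2 * (a - b)| = 2 * (a - b) := abs_of_nonneg (by linarith)
              linarith
          _ ≤ 2 * (a + 2) := by linarith
      have hδ0 : 0 ≤ δ := by positivity
      calc |(X ω - Y ω) - (a - b)| * |(X ω - Y ω) + (a - b)|
          ≤ (2 * δ) * (2 * (a + 2)) := by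
            exact mul_le_mul e1 e2 (abs_nonneg _) (by linarith)
        _ = ε := by linarith [hδε]
    linarith
  calc P {ω | ε < |(X ω - Y ω) ^ 2 - (a - b) ^ 2|}
      ≤ P ({ω | δ < |X ω - a|} ∪ {ω | δ < |Y ω - b|}) := measure_mono hsub
    _ ≤ P {ω | δ < |X ω - a|} + P {ω | δ < |Y ω - b|} := measure_union_le _ _
    _ ≤ 3 * (P {ω | δ < |X ω - a|} + P {ω | δ < |Y ω - b|}) := by
        nth_rewrite 1 [← one_mul (P {ω | δ < |X ω - a|} + P {ω | δ < |Y ω - b|})]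
        exact mul_le_mul_left (by norm_num) _
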